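/- For any integrable real random variables X and Y, sup_{p ∈ [0,1]} (F^{(−2)}_Y(p) − F^{(−2)}_X(p)) = sup_{η ∈ ℝ} (F^{(2)}_X(η) − F^{(2)}_Y(η)). -/

import Mathlib

open MeasureTheory Filter Set

noncomputable section

/-- Distribution function `F_Z(η) = P(Z ≤ η)`. -/
def cdfRV {Ω : Type*} [MeasurableSpace Ω] (P : Measure Ω) (Z : Ω → ℝ) (η : ℝ) : ℝ :=
  (P {ω | Z ω ≤ η}).toReal

/-- Quantile function `F⁻¹_Z(p) = inf {η | F_Z(η) ≥ p}`. -/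
def qf {Ω : Type*} [MeasurableSpace Ω] (P : Measure Ω) (Z : Ω → ℝ) (p : ℝ) : ℝ :=
  sInf {η : ℝ | p ≤ cdfRV P Z η}

/-- Absolute Lorenz function `F^{(-2)}_Z(p) = ∫₀^p F⁻¹_Z(t) dt`. -/
def lorenz {Ω : Type*} [MeasurableSpace Ω] (P : Measure Ω) (Z : Ω → ℝ) (p : ℝ) : ℝ :=
  ∫ t in (0:ℝ)..p, qf P Z t

/-- Shortfall function `F^{(2)}_Z(η) = E[max(η - Z, 0)]`. -/
def shortfall {Ω : Type*} [MeasurableSpace Ω] (P : Measure Ω) (Z : Ω → ℝ) (η : ℝ) : ℝ :=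
  ∫ ω, max (η - Z ω) 0 ∂P

/-- Second-order stochastic dominance. -/
def SSD {Ω : Type*} [MeasurableSpace Ω] (P : Measure Ω) (Z Y : Ω → ℝ) : Prop :=
  ∀ η : ℝ, shortfall P Z η ≤ shortfall P Y η

/-- First-order Wasserstein distance. -/
def W1 {Ω : Type*} [MeasurableSpace Ω] (P : Measure Ω) (X Z : Ω → ℝ) : ℝ :=
  ∫ p in (0:ℝ)..1, |qf P X p - qf P Z p|

/-- Distance from `X` to the set `A₂(Y)` of integrable random variables dominating `Y`
in the second order, in terms of `W₁`. -/
def distA2 {Ω : Type*} [MeasurableSpace Ω] (P : Measure Ω) (X Y : Ω → ℝ) : ℝ :=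
  sInf {d : ℝ | ∃ Z : Ω → ℝ, Integrable Z P ∧ SSD P Z Y ∧ d = W1 P X Z}

/-- An atomless probability space. -/
def Atomless {Ω : Type*} [MeasurableSpace Ω] (P : Measure Ω) : Prop :=
  ∀ s : Set Ω, MeasurableSet s → P s ≠ 0 →
    ∃ t : Set Ω, t ⊆ s ∧ MeasurableSet t ∧ 0 < P t ∧ P t < P s

/-- `r`-th order shortfall transform `F^{(r)}_Z(η) = (1/Γ(r)) E[max(η-Z,0)^{r-1}]`,
with the convention `max(η-z,0)^0 = 𝟙_{z ≤ η}`. -/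
def sfr {Ω : Type*} [MeasurableSpace Ω] (P : Measure Ω) (Z : Ω → ℝ) (r η : ℝ) : ℝ :=
  (1 / Real.Gamma r) * ∫ ω, (if Z ω ≤ η then (η - Z ω) ^ (r - 1) else 0) ∂P

/-- `r`-th order stochastic dominance: `Z ≽_{(r)} Y`. -/
def domR {Ω : Type*} [MeasurableSpace Ω] (P : Measure Ω) (Z Y : Ω → ℝ) (r : ℝ) : Prop :=
  ∀ η : ℝ, sfr P Z r η ≤ sfr P Y r η

/-!
Under the quantile transform the law of `Z` is the image of Lebesgue measure on `(0,1)` by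
`F⁻¹_Z`, so `F^{(2)}_Z(η) = ∫₀¹ (η - F⁻¹_Z(t))⁺ dt`. Comparing with
`p η - F^{(-2)}_Z(p) = ∫₀ᵖ (η - F⁻¹_Z(t)) dt` gives the Fenchel–Young inequality
`p η - F^{(-2)}_Z(p) ≤ F^{(2)}_Z(η)`, with equality when `p = F_Z(η)` or `η = F⁻¹_Z(p)`.
Hence the shortfall gap at `η` is at most the Lorenz gap at `p = F_X(η)`, and for `0 < p < 1`
the Lorenz gap at `p` is at most the shortfall gap at `η = F⁻¹_Y(p)`; the endpoints `p = 0, 1`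
follow by continuity of the Lorenz functions.
-/

open ProbabilityTheory

section QuantileTransform

variable {Ω : Type*} [MeasurableSpace Ω] {P : Measure Ω} [IsProbabilityMeasure P] {Z : Ω → ℝ}
  {p t η : ℝ}

variable (P Z) in
lemma cdfRV_mem_Icc (η : ℝ) : cdfRV P Z η ∈ Icc (0:ℝ) 1 :=
  ⟨ENNReal.toReal_nonneg, ENNReal.toReal_le_of_le_ofReal zero_le_one (by simpa using prob_le_one)⟩

lemma cdfRV_eq_cdf_map (hZ : AEMeasurable Z P) : cdfRV P Z = cdf (P.map Z) := by
  have := Measure.isProbabilityMeasure_map hZ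
  ext η
  rw [cdf_eq_real, measureReal_def, Measure.map_apply_of_aemeasurable hZ measurableSet_Iic]
  rfl

lemma qf_le_iff (hZ : AEMeasurable Z P) (ht : t ∈ Ioo (0:ℝ) 1) :
    qf P Z t ≤ η ↔ t ≤ cdfRV P Z η := by
  have := Measure.isProbabilityMeasure_map hZ
  rw [qf, cdfRV_eq_cdf_map hZ]
  set F := cdf (P.map Z)
  have hne : {x | t ≤ F x}.Nonempty :=
    ((tendsto_cdf_atTop _).eventually (eventually_gt_nhds ht.2)).exists.imp fun _ h => h.le
  have hbdd : BddBelow {x | t ≤ F x} := by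
    obtain ⟨a, ha⟩ :=
      eventually_atBot.1 ((tendsto_cdf_atBot _).eventually (eventually_lt_nhds ht.1))
    exact ⟨a, fun x hx => not_lt.1 fun hxa => (ha x hxa.le).not_ge hx⟩
  refine ⟨fun h => ?_, fun h => csInf_le hbdd h⟩
  -- `t ≤ F s` for every `s > η`, and `F` is right-continuous at `η`.
  refine ge_of_tendsto ((F.right_continuous η).tendsto.mono_left
    (nhdsWithin_mono _ Ioi_subset_Ici_self)) ?_
  filter_upwards [self_mem_nhdsWithin] with s hs
  obtain ⟨a, ha, has⟩ := exists_lt_of_csInf_lt hne (h.trans_lt hs)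
  exact ha.trans (F.mono has.le)

lemma monotoneOn_qf (hZ : AEMeasurable Z P) : MonotoneOn (qf P Z) (Ioo (0:ℝ) 1) :=
  fun _ hs _ ht hst => (qf_le_iff hZ hs).2 (hst.trans ((qf_le_iff hZ ht).1 le_rfl))

lemma aemeasurable_qf (hZ : AEMeasurable Z P) :
    AEMeasurable (qf P Z) (volume.restrict (Ioo (0:ℝ) 1)) :=
  aemeasurable_restrict_of_monotoneOn measurableSet_Ioo (monotoneOn_qf hZ)

lemma map_qf (hZ : AEMeasurable Z P) :
    (volume.restrict (Ioo (0:ℝ) 1)).map (qf P Z) = P.map Z := by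
  have := Measure.isProbabilityMeasure_map hZ
  have : IsFiniteMeasure (volume.restrict (Ioo (0:ℝ) 1)) := ⟨by simp⟩
  refine Measure.ext_of_Iic _ _ fun a => ?_
  rw [Measure.map_apply_of_aemeasurable (aemeasurable_qf hZ) measurableSet_Iic,
    Measure.restrict_apply' measurableSet_Ioo, ← ofReal_cdf, ← cdfRV_eq_cdf_map hZ]
  have hc1 := (cdfRV_mem_Icc P Z a).2
  have hset : qf P Z ⁻¹' Iic a ∩ Ioo 0 1 = Iic (cdfRV P Z a) ∩ Ioo 0 1 := by
    ext t
    simp only [mem_inter_iff, mem_preimage, mem_Iic, and_congr_left_iff]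
    exact fun ht => qf_le_iff hZ ht
  rw [hset]
  refine le_antisymm ?_ ?_
  · calc volume (Iic (cdfRV P Z a) ∩ Ioo 0 1) ≤ volume (Ioc 0 (cdfRV P Z a)) :=
          measure_mono fun _ ht => ⟨ht.2.1, ht.1⟩
      _ = _ := by rw [Real.volume_Ioc, sub_zero]
  · calc ENNReal.ofReal (cdfRV P Z a) = volume (Ioo 0 (cdfRV P Z a)) := by
          rw [Real.volume_Ioo, sub_zero]
      _ ≤ volume (Iic (cdfRV P Z a) ∩ Ioo 0 1) :=
          measure_mono fun _ ht => ⟨ht.2.le, ht.1, ht.2.trans_le hc1⟩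

lemma shortfall_eq_setIntegral_qf (hZ : AEMeasurable Z P) (η : ℝ) :
    shortfall P Z η = ∫ t in Ioo (0:ℝ) 1, max (η - qf P Z t) 0 := by
  have hf : Continuous fun x : ℝ => max (η - x) 0 := by fun_prop
  calc shortfall P Z η = ∫ x, max (η - x) 0 ∂(P.map Z) :=
        (integral_map hZ hf.aestronglyMeasurable).symm
    _ = _ := by rw [← map_qf hZ, integral_map (aemeasurable_qf hZ) hf.aestronglyMeasurable]

lemma integrableOn_qf (hZ : Integrable Z P) : IntegrableOn (qf P Z) (Ioo (0:ℝ) 1) := by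
  have h : Integrable id (P.map Z) :=
    (integrable_map_measure aestronglyMeasurable_id hZ.aemeasurable).2 hZ
  rw [← map_qf hZ.aemeasurable] at h
  exact (integrable_map_measure aestronglyMeasurable_id (aemeasurable_qf hZ.aemeasurable)).1 h

lemma continuousOn_lorenz (hZ : Integrable Z P) : ContinuousOn (lorenz P Z) (Icc 0 1) := by
  have h := intervalIntegral.continuousOn_primitive_interval (μ := volume) (a := 0) (b := 1)
    (f := qf P Z) (by
      rw [uIcc_of_le zero_le_one]
      exact (integrableOn_Icc_iff_integrableOn_Ioo).2 (integrableOn_qf hZ))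
  rwa [uIcc_of_le zero_le_one] at h

lemma setIntegral_indicator_Ioc_sub_qf (hZ : Integrable Z P) (hp : p ∈ Icc (0:ℝ) 1) (η : ℝ) :
    ∫ t in Ioo (0:ℝ) 1, (Ioc 0 p).indicator (fun t => η - qf P Z t) t =
      p * η - lorenz P Z p := by
  have hQ : IntegrableOn (qf P Z) (Ioc 0 p) :=
    ((integrableOn_qf hZ).mono_set (Ioo_subset_Ioo_right hp.2)).congr_set_ae Ioo_ae_eq_Ioc.symm
  rw [setIntegral_indicator measurableSet_Ioc,
    setIntegral_congr_set ((Ioo_ae_eq_Ioc (μ := volume)).inter (ae_eq_refl (Ioc 0 p))),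
    inter_eq_right.2 (Ioc_subset_Ioc_right hp.2), integral_sub (integrable_const η) hQ,
    setIntegral_const, lorenz, intervalIntegral.integral_of_le hp.1,
    Real.volume_real_Ioc_of_le hp.1, sub_zero, smul_eq_mul, mul_comm]

theorem mul_sub_lorenz_le_shortfall (hZ : Integrable Z P) (hp : p ∈ Icc (0:ℝ) 1) (η : ℝ) :
    p * η - lorenz P Z p ≤ shortfall P Z η := by
  have hsub : IntegrableOn (fun t => η - qf P Z t) (Ioo (0:ℝ) 1) :=
    (integrable_const η).sub (integrableOn_qf hZ)
  rw [← setIntegral_indicator_Ioc_sub_qf hZ hp, shortfall_eq_setIntegral_qf hZ.aemeasurable]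
  exact integral_mono (hsub.indicator measurableSet_Ioc) hsub.pos_part
    ((Ioc 0 p).indicator_le' (fun _ _ => le_max_left _ _) fun _ _ => le_max_right _ _)

theorem shortfall_eq_mul_sub_lorenz (hZ : Integrable Z P) (hp : p ∈ Icc (0:ℝ) 1)
    (hle : ∀ t ∈ Ioo (0:ℝ) 1, t ≤ p → qf P Z t ≤ η)
    (hge : ∀ t ∈ Ioo (0:ℝ) 1, p < t → η ≤ qf P Z t) :
    shortfall P Z η = p * η - lorenz P Z p := by
  rw [← setIntegral_indicator_Ioc_sub_qf hZ hp, shortfall_eq_setIntegral_qf hZ.aemeasurable]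
  refine setIntegral_congr_fun measurableSet_Ioo fun t ht => ?_
  rcases le_or_gt t p with htp | hpt
  · rw [indicator_of_mem (show t ∈ Ioc 0 p from ⟨ht.1, htp⟩)]
    exact max_eq_left (sub_nonneg.2 (hle t ht htp))
  · rw [indicator_of_notMem (show t ∉ Ioc 0 p from fun h => hpt.not_ge h.2)]
    exact max_eq_right (sub_nonpos.2 (hge t ht hpt))

theorem shortfall_eq_cdfRV_mul_sub_lorenz (hZ : Integrable Z P) (η : ℝ) :
    shortfall P Z η = cdfRV P Z η * η - lorenz P Z (cdfRV P Z η) :=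
  shortfall_eq_mul_sub_lorenz hZ (cdfRV_mem_Icc P Z η)
    (fun _ ht htp => (qf_le_iff hZ.aemeasurable ht).2 htp)
    (fun _ ht hpt => le_of_not_ge fun h => hpt.not_ge ((qf_le_iff hZ.aemeasurable ht).1 h))

theorem shortfall_qf_eq_mul_sub_lorenz (hZ : Integrable Z P) (hp : p ∈ Ioo (0:ℝ) 1) :
    shortfall P Z (qf P Z p) = p * qf P Z p - lorenz P Z p :=
  shortfall_eq_mul_sub_lorenz hZ (Ioo_subset_Icc_self hp)
    (fun _ ht htp => monotoneOn_qf hZ.aemeasurable ht hp htp)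
    (fun _ ht hpt => monotoneOn_qf hZ.aemeasurable hp ht hpt.le)

end QuantileTransform

theorem csSup_image_Icc_eq_csSup_range {a b : ℝ} (hab : a < b) {G H : ℝ → ℝ}
    (hG : ContinuousOn G (Icc a b)) (hHG : ∀ η, ∃ p ∈ Icc a b, H η ≤ G p)
    (hGH : ∀ p ∈ Ioo a b, ∃ η, G p ≤ H η) :
    sSup (G '' Icc a b) = sSup (range H) := by
  have hGbdd : BddAbove (G '' Icc a b) := isCompact_Icc.bddAbove_image hG
  have hHbdd : BddAbove (range H) := by
    obtain ⟨c, hc⟩ := hGbdd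
    refine ⟨c, forall_mem_range.2 fun η => ?_⟩
    obtain ⟨p, hp, hle⟩ := hHG η
    exact hle.trans (hc (mem_image_of_mem G hp))
  refine le_antisymm (csSup_le ((nonempty_Icc.2 hab.le).image G) ?_)
    (csSup_le (range_nonempty H) ?_)
  · have hIoo : G '' Ioo a b ⊆ Iic (sSup (range H)) := by
      rintro _ ⟨p, hp, rfl⟩
      obtain ⟨η, hη⟩ := hGH p hp
      exact hη.trans (le_csSup hHbdd (mem_range_self η))
    rw [← closure_Ioo hab.ne] at hG ⊢
    exact fun x hx => isClosed_Iic.closure_subset_iff.2 hIoo (hG.image_closure hx)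
  · rintro _ ⟨η, rfl⟩
    obtain ⟨p, hp, hle⟩ := hHG η
    exact hle.trans (le_csSup hGbdd (mem_image_of_mem G hp))

/-- the supremum of the Lorenz-function gap over `[0,1]` equals the supremum
of the shortfall-function gap over `ℝ`. -/
theorem stmt8 {Ω : Type*} [MeasurableSpace Ω] (P : Measure Ω) [IsProbabilityMeasure P]
    (X Y : Ω → ℝ) (hX : Integrable X P) (hY : Integrable Y P) :
    sSup ((fun p => lorenz P Y p - lorenz P X p) '' Set.Icc (0:ℝ) 1) =
      sSup (Set.range fun η : ℝ => shortfall P X η - shortfall P Y η) := by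
  refine csSup_image_Icc_eq_csSup_range zero_lt_one
    ((continuousOn_lorenz hY).sub (continuousOn_lorenz hX))
    (fun η => ⟨cdfRV P X η, cdfRV_mem_Icc P X η, ?_⟩) (fun p hp => ⟨qf P Y p, ?_⟩)
  · linarith [shortfall_eq_cdfRV_mul_sub_lorenz hX η,
      mul_sub_lorenz_le_shortfall hY (cdfRV_mem_Icc P X η) η]
  · linarith [shortfall_qf_eq_mul_sub_lorenz hY hp,
      mul_sub_lorenz_le_shortfall hX (Ioo_subset_Icc_self hp) (qf P Y p)]

end
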